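/- (Generalized merging) Let G be a Σ_k-labeled bidirected graph. Suppose nodes x and y belong to the same DSCC, and suppose for some 1 ≤ i ≤ k there exist paths P₁ : x ⇝ u and P₂ : y ⇝ v with λ(P₁) = w₁·ᾱ_i and λ(P₂) = w₂·ᾱ_i where w₁, w₂ ∈ 𝓛_k. Then u and v belong to the same DSCC. -/
import Mathlib


/-- The Dyck alphabet `Σ_k`: `k` opening symbols `α_i` and `k` closing symbols `ᾱ_i`. -/
inductive DSym (k : ℕ) : Type
  | op (i : Fin k)
  | cl (i : Fin k)

/-- The Dyck language `𝓛_k`: the least set of words containing the empty word, closed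
under concatenation and under wrapping with a matched pair of parentheses. -/
inductive Dyck {k : ℕ} : List (DSym k) → Prop
  | nil : Dyck []
  | concat {w₁ w₂ : List (DSym k)} : Dyck w₁ → Dyck w₂ → Dyck (w₁ ++ w₂)
  | wrap {w : List (DSym k)} (i : Fin k) : Dyck w → Dyck (DSym.op i :: (w ++ [DSym.cl i]))

/-- `PathLabel E u v w` : there is a path from `u` to `v` in the `Σ_k`-labeled graph with
edge relation `E` (labels in `Σ_k ∪ {ε}`, with `ε = none`), whose label (ε contributing
the empty word) is `w`. -/
inductive PathLabel {V : Type} {k : ℕ} (E : V → V → Option (DSym k) → Prop) :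
    V → V → List (DSym k) → Prop
  | refl (u : V) : PathLabel E u u []
  | step {u v w : V} {l : Option (DSym k)} {s : List (DSym k)} :
      E u v l → PathLabel E v w s → PathLabel E u w (l.toList ++ s)

/-- `v` is Dyck-reachable from `u`. -/
def DyckReach {V : Type} {k : ℕ} (E : V → V → Option (DSym k) → Prop) (u v : V) : Prop :=
  ∃ w, PathLabel E u v w ∧ Dyck w

/-- A `Σ_k`-labeled graph is bidirected if ε-edges come in symmetric pairs and each
`α_i`-labeled edge is matched by a reverse `ᾱ_i`-labeled edge. -/
def Bidirected {V : Type} {k : ℕ} (E : V → V → Option (DSym k) → Prop) : Prop :=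
  (∀ u v, E u v none ↔ E v u none) ∧
  (∀ u v (i : Fin k), E u v (some (DSym.op i)) ↔ E v u (some (DSym.cl i)))


/-- Two nodes belong to the same DSCC iff each is Dyck-reachable from the other. -/
def SameDSCC {V : Type} {k : ℕ} (E : V → V → Option (DSym k) → Prop) (u v : V) : Prop :=
  DyckReach E u v ∧ DyckReach E v u

def dflip {k : ℕ} : DSym k → DSym k
  | .op i => .cl i
  | .cl i => .op i

def drev {k : ℕ} (w : List (DSym k)) : List (DSym k) := (w.map dflip).reverse

lemma drev_append {k : ℕ} (w₁ w₂ : List (DSym k)) :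
    drev (w₁ ++ w₂) = drev w₂ ++ drev w₁ := by
  simp [drev]

lemma dyck_drev {k : ℕ} {w : List (DSym k)} (h : Dyck w) : Dyck (_root_.drev w) := by
  induction h with
  | nil => exact Dyck.nil
  | concat h₁ h₂ ih₁ ih₂ => rw [drev_append]; exact Dyck.concat ih₂ ih₁
  | @wrap w' i h ih =>
      have : drev (DSym.op i :: (w' ++ [DSym.cl i])) =
          DSym.op i :: (drev w' ++ [DSym.cl i]) := by
        simp [drev, dflip]
      rw [this]
      exact Dyck.wrap i ih

lemma PathLabel.trans {V : Type} {k : ℕ} {E : V → V → Option (DSym k) → Prop}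
    {a b c : V} {w s : List (DSym k)}
    (h₁ : PathLabel E a b w) (h₂ : PathLabel E b c s) :
    PathLabel E a c (w ++ s) := by
  induction h₁ with
  | refl => simpa
  | step he hp ih => rw [List.append_assoc]; exact PathLabel.step he (ih h₂)

lemma PathLabel.reverse {V : Type} {k : ℕ} {E : V → V → Option (DSym k) → Prop}
    (hbi : Bidirected E) {a b : V} {w : List (DSym k)}
    (h : PathLabel E a b w) : PathLabel E b a (drev w) := by
  induction h with
  | refl u => exact PathLabel.refl u
  | @step u v _ l s he hp ih =>
      have hrev : PathLabel E v u ((Option.map dflip l).toList ++ []) := by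
        refine PathLabel.step ?_ (PathLabel.refl u)
        match l with
        | none => exact (hbi.1 u v).mp he
        | some (.op j) => exact (hbi.2 u v j).mp he
        | some (.cl j) => exact (hbi.2 v u j).mpr he
      have : drev (l.toList ++ s) = drev s ++ ((Option.map dflip l).toList ++ []) := by
        match l with
        | none => simp [drev]
        | some x => simp [drev]
      rw [this]
      exact PathLabel.trans ih hrev

/-- Generalized merging: if `x` and `y` are in the same DSCC of a bidirected graph and
there are paths `P₁ : x ⇝ u` and `P₂ : y ⇝ v` with labels `w₁ · ᾱ_i` and `w₂ · ᾱ_i`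
where `w₁, w₂ ∈ 𝓛_k`, then `u` and `v` are in the same DSCC. -/
theorem generalized_merging {V : Type} {k : ℕ} (hk : 1 ≤ k)
    (E : V → V → Option (DSym k) → Prop) (hbi : Bidirected E)
    {x y u v : V} (i : Fin k) (hxy : SameDSCC E x y)
    {w₁ w₂ : List (DSym k)} (hw₁ : Dyck w₁) (hw₂ : Dyck w₂)
    (hP₁ : PathLabel E x u (w₁ ++ [DSym.cl i]))
    (hP₂ : PathLabel E y v (w₂ ++ [DSym.cl i])) :
    SameDSCC E u v := by
  obtain ⟨⟨p, hp, hdp⟩, ⟨q, hq, hdq⟩⟩ := hxy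
  constructor
  · -- u ⇝ x ⇝ y ⇝ v
    refine ⟨DSym.op i :: ((drev w₁ ++ p ++ w₂) ++ [DSym.cl i]), ?_, ?_⟩
    · have h1 : PathLabel E u x (drev (w₁ ++ [DSym.cl i])) := PathLabel.reverse hbi hP₁
      have heq : drev (w₁ ++ [DSym.cl i]) = DSym.op i :: drev w₁ := by
        simp [drev, dflip]
      rw [heq] at h1
      have h2 := PathLabel.trans h1 (PathLabel.trans hp hP₂)
      simpa using h2
    · exact Dyck.wrap i (Dyck.concat (Dyck.concat (dyck_drev hw₁) hdp) hw₂)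
  · refine ⟨DSym.op i :: ((drev w₂ ++ q ++ w₁) ++ [DSym.cl i]), ?_, ?_⟩
    · have h1 : PathLabel E v y (drev (w₂ ++ [DSym.cl i])) := PathLabel.reverse hbi hP₂
      have heq : drev (w₂ ++ [DSym.cl i]) = DSym.op i :: drev w₂ := by
        simp [drev, dflip]
      rw [heq] at h1
      have h2 := PathLabel.trans h1 (PathLabel.trans hq hP₁)
      simpa using h2
    · exact Dyck.wrap i (Dyck.concat (Dyck.concat (dyck_drev hw₂) hdq) hw₁)
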